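/- arXiv:0909.4770 — 2 statements merged into one kernel-verified Lean document; each statement's English description precedes it below -/
import Mathlib

section
/- Let Γ be a countable group and Γ' ⊴ Γ a finite-index normal subgroup. If f ∈ ℤΓ is invertible in ℓ¹(Γ), then the set Fix(Γ', X_f) of points of X_f fixed by every element of Γ' is finite; indeed it is in bijection with X_f^{Γ'} := {x ∈ 𝕋^{Γ'\Γ} : x·f* = 0}, a closed subgroup of the finite-dimensional torus 𝕋^{Γ'\Γ} which is finite. -/
open scoped BigOperators

/-- Convolution `(g·h)(γ) = ∑ β, g β * h (β⁻¹ γ)` of real functions. -/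
noncomputable def convR {Γ : Type*} [Group Γ] (g h : Γ → ℝ) : Γ → ℝ :=
  fun γ => ∑' β : Γ, g β * h (β⁻¹ * γ)

/-- Indicator of the identity. -/
def deltaE (Γ : Type*) [Group Γ] [DecidableEq Γ] : Γ → ℝ :=
  fun γ => if γ = 1 then 1 else 0

/-- The adjoint `f*` of `f ∈ ℤΓ`: `f*(γ) = f(γ⁻¹)`. -/
def fstar {Γ : Type*} [Group Γ] (f : Γ →₀ ℤ) : Γ →₀ ℤ :=
  Finsupp.equivMapDomain (Equiv.inv Γ) f

/-- Convolution of a `𝕋`-valued function with `g ∈ ℤΓ`: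
`(x·g)(γ) = ∑ β, g(β) • x(γ β⁻¹)`. -/
noncomputable def convT {Γ : Type*} [Group Γ] (x : Γ → AddCircle (1 : ℝ))
    (g : Γ →₀ ℤ) : Γ → AddCircle (1 : ℝ) :=
  fun γ => ∑ β ∈ g.support, g β • x (γ * β⁻¹)

/-!
Lift each coordinate of `x ∈ X_f` to `[0, 1)` and convolve with `f`: the resulting real function
`liftedConv f x` is integer valued (it lifts `x·f* = 0`) and bounded by `‖f‖₁`. Two points with the
same lift differ by a bounded real `z` with `z·f = 0`, and the left `ℓ¹`-inverse of `f` forces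
`z = 0`. A `Γ'`-fixed `x` has a `Γ'`-invariant lift, determined by its values on the finite set
`Γ'\Γ`, each of them one of finitely many integers.
-/

theorem summable_mul_of_abs_le {ι : Type*} {z a : ι → ℝ} {C : ℝ} (hz : ∀ i, |z i| ≤ C)
    (ha : Summable fun i => ‖a i‖) : Summable fun i => z i * a i :=
  .of_norm_bounded (ha.mul_left C) fun i => by
    rw [norm_mul, Real.norm_eq_abs]
    exact mul_le_mul_of_nonneg_right (hz i) (norm_nonneg _)

section Invariant

variable {Γ α : Type*} [Group Γ] (H : Subgroup Γ)

def invariantEquivQuotient (P : (Γ → α) → Prop) :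
    {x : Γ → α | P x ∧ ∀ g ∈ H, ∀ γ, x (g⁻¹ * γ) = x γ} ≃
      {ψ : Quotient (QuotientGroup.rightRel H) → α |
        P fun γ => ψ (Quotient.mk (QuotientGroup.rightRel H) γ)} where
  toFun x := ⟨Quotient.lift x.1 fun a b hab => by
      simpa using x.2.2 _ (QuotientGroup.rightRel_apply.mp hab) b, x.2.1⟩
  invFun ψ := ⟨fun γ => ψ.1 (Quotient.mk _ γ), ψ.2, fun g hg γ =>
      congrArg ψ.1 (Quotient.sound (QuotientGroup.rightRel_apply.mpr (by simpa using hg)))⟩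
  left_inv _ := rfl
  right_inv ψ := Subtype.ext (funext fun q => Quotient.inductionOn q fun _ => rfl)

theorem finite_setOf_forall_mem_and_invariant [H.FiniteIndex] {S : Set α} (hS : S.Finite) :
    {x : Γ → α | (∀ γ, x γ ∈ S) ∧ ∀ g ∈ H, ∀ γ, x (g⁻¹ * γ) = x γ}.Finite := by
  have : Finite (Quotient (QuotientGroup.rightRel H)) :=
    .of_equiv _ (QuotientGroup.quotientRightRelEquivQuotientLeftRel H).symm
  rw [← Set.finite_coe_iff, (invariantEquivQuotient H _).finite_iff, Set.finite_coe_iff]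
  refine (Set.Finite.pi fun _ => hS).subset fun ψ hψ q _ => ?_
  induction q using Quotient.inductionOn with
  | h γ => exact hψ γ

end Invariant

section Convolution

variable {Γ : Type*} [Group Γ]

theorem convR_intCast_apply (g : Γ → ℝ) (f : Γ →₀ ℤ) (τ : Γ) :
    convR g (fun γ => (f γ : ℝ)) τ = ∑ b ∈ f.support, g (τ * b⁻¹) * f b := by
  rw [convR, ← ((Equiv.inv Γ).trans (Equiv.mulLeft τ)).tsum_eq,
    tsum_eq_sum (s := f.support) fun b hb => by simp [Finsupp.notMem_support_iff.mp hb]]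
  simp

theorem eq_zero_of_abs_le_of_sum_mul_eq_zero [DecidableEq Γ] (f : Γ →₀ ℤ) {finv : Γ → ℝ}
    (hfinv : Summable fun γ => ‖finv γ‖) (hleft : convR finv (fun γ => (f γ : ℝ)) = deltaE Γ)
    {z : Γ → ℝ} {C : ℝ} (hC : ∀ γ, |z γ| ≤ C)
    (hz : ∀ ρ, ∑ b ∈ f.support, (f b : ℝ) * z (ρ * b) = 0) : z = 0 := by
  funext γ
  show z γ = 0
  have hsummable : ∀ b : Γ, Summable fun σ => z (γ * σ) * finv (σ * b⁻¹) := fun b =>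
    summable_mul_of_abs_le (fun _ => hC _) ((Equiv.mulRight b⁻¹).summable_iff.mpr hfinv)
  -- reassociate `(z·f)·finv = z·(f·finv)`, legitimate as `z` is bounded and `finv ∈ ℓ¹`
  calc z γ = ∑' σ, z (γ * σ) * deltaE Γ σ := by simp [deltaE]
    _ = ∑' σ, ∑ b ∈ f.support, (f b : ℝ) * (z (γ * σ) * finv (σ * b⁻¹)) := by
        refine tsum_congr fun σ => ?_
        rw [← hleft, convR_intCast_apply, Finset.mul_sum]
        exact Finset.sum_congr rfl fun b _ => by ring
    _ = ∑ b ∈ f.support, ∑' ρ, (f b : ℝ) * (z (γ * ρ * b) * finv ρ) := by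
        rw [Summable.tsum_finsetSum fun b _ => (hsummable b).mul_left _]
        refine Finset.sum_congr rfl fun b _ => ?_
        rw [← (Equiv.mulRight b).tsum_eq]
        simp [mul_assoc]
    _ = ∑' ρ, (∑ b ∈ f.support, (f b : ℝ) * z (γ * ρ * b)) * finv ρ := by
        rw [← Summable.tsum_finsetSum fun b _ =>
          (summable_mul_of_abs_le (fun _ => hC _) hfinv).mul_left _]
        refine tsum_congr fun ρ => ?_
        rw [Finset.sum_mul]
        exact Finset.sum_congr rfl fun _ _ => by ring
    _ = 0 := by simp [hz]

end Convolution

noncomputable def circleLift (u : AddCircle (1 : ℝ)) : ℝ :=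
  AddCircle.equivIco 1 0 u

theorem coe_circleLift (u : AddCircle (1 : ℝ)) : (circleLift u : AddCircle (1 : ℝ)) = u :=
  (AddCircle.equivIco 1 0).symm_apply_apply u

theorem circleLift_mem_Ico (u : AddCircle (1 : ℝ)) : circleLift u ∈ Set.Ico (0 : ℝ) 1 := by
  obtain ⟨h0, h1⟩ := (AddCircle.equivIco 1 0 u).2
  exact ⟨h0, h1.trans_eq (zero_add 1)⟩

section LiftedConv

variable {Γ : Type*} [Group Γ] (f : Γ →₀ ℤ)

noncomputable def liftedConv (x : Γ → AddCircle (1 : ℝ)) (γ : Γ) : ℝ :=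
  ∑ b ∈ f.support, (f b : ℝ) * circleLift (x (γ * b))

theorem convT_fstar_apply (x : Γ → AddCircle (1 : ℝ)) (γ : Γ) :
    convT x (fstar f) γ = ∑ b ∈ f.support, f b • x (γ * b) := by
  have hsupp : (fstar f).support = f.support.map (Equiv.inv Γ).toEmbedding := by
    ext a
    simp [fstar]
  rw [convT, hsupp, Finset.sum_map]
  simp [fstar]

theorem coe_liftedConv (x : Γ → AddCircle (1 : ℝ)) (γ : Γ) :
    (liftedConv f x γ : AddCircle (1 : ℝ)) = convT x (fstar f) γ := by
  simp [liftedConv, convT_fstar_apply, ← zsmul_eq_mul, coe_circleLift]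

theorem abs_liftedConv_le (x : Γ → AddCircle (1 : ℝ)) (γ : Γ) :
    |liftedConv f x γ| ≤ ∑ b ∈ f.support, |(f b : ℝ)| := by
  refine (Finset.abs_sum_le_sum_abs _ _).trans (Finset.sum_le_sum fun b _ => ?_)
  obtain ⟨h0, h1⟩ := circleLift_mem_Ico (x (γ * b))
  rw [abs_mul, abs_of_nonneg h0]
  exact mul_le_of_le_one_right (abs_nonneg _) h1.le

theorem liftedConv_mem_image_Icc {x : Γ → AddCircle (1 : ℝ)} (hx : ∀ γ, convT x (fstar f) γ = 0)
    (γ : Γ) : liftedConv f x γ ∈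
      ((↑) : ℤ → ℝ) '' Set.Icc (-∑ b ∈ f.support, |f b|) (∑ b ∈ f.support, |f b|) := by
  obtain ⟨n, hn⟩ := (AddCircle.coe_eq_zero_iff 1).mp ((coe_liftedConv f x γ).trans (hx γ))
  rw [zsmul_one] at hn
  refine ⟨n, abs_le.mp ?_, hn⟩
  exact_mod_cast hn ▸ abs_liftedConv_le f x γ

theorem liftedConv_inv_mul {x : Γ → AddCircle (1 : ℝ)} {g : Γ}
    (hx : ∀ γ, x (g⁻¹ * γ) = x γ) (γ : Γ) : liftedConv f x (g⁻¹ * γ) = liftedConv f x γ := by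
  simp only [liftedConv, mul_assoc, hx]

theorem liftedConv_injective [DecidableEq Γ] {finv : Γ → ℝ}
    (hfinv : Summable fun γ => ‖finv γ‖) (hleft : convR finv (fun γ => (f γ : ℝ)) = deltaE Γ) :
    Function.Injective (liftedConv f) := by
  intro x y hxy
  have hlift : (fun γ => circleLift (x γ) - circleLift (y γ)) = 0 := by
    refine eq_zero_of_abs_le_of_sum_mul_eq_zero f hfinv hleft (C := 1) (fun γ => ?_) fun ρ => ?_
    · obtain ⟨hx0, hx1⟩ := circleLift_mem_Ico (x γ)
      obtain ⟨hy0, hy1⟩ := circleLift_mem_Ico (y γ)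
      exact abs_sub_le_iff.mpr ⟨by linarith, by linarith⟩
    · simp only [mul_sub, Finset.sum_sub_distrib]
      exact sub_eq_zero.mpr (congrFun hxy ρ)
  funext γ
  rw [← coe_circleLift (x γ), ← coe_circleLift (y γ), sub_eq_zero.mp (congrFun hlift γ)]

end LiftedConv

theorem stmt6_general {Γ : Type*} [Group Γ] [DecidableEq Γ]
    (Γ' : Subgroup Γ) [Γ'.FiniteIndex]
    (f : Γ →₀ ℤ) (finv : Γ → ℝ)
    (hfinv : Summable fun γ => ‖finv γ‖)
    (h2 : convR finv (fun γ => (f γ : ℝ)) = deltaE Γ) :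
    Set.Finite {x : Γ → AddCircle (1 : ℝ) |
        (∀ γ, convT x (fstar f) γ = 0) ∧ ∀ g ∈ Γ', ∀ γ, x (g⁻¹ * γ) = x γ} ∧
    Nonempty
      ({x : Γ → AddCircle (1 : ℝ) |
          (∀ γ, convT x (fstar f) γ = 0) ∧ ∀ g ∈ Γ', ∀ γ, x (g⁻¹ * γ) = x γ} ≃
        {ψ : Quotient (QuotientGroup.rightRel Γ') → AddCircle (1 : ℝ) |
          ∀ γ, convT (fun g => ψ (Quotient.mk (QuotientGroup.rightRel Γ') g))
            (fstar f) γ = 0}) := by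
  refine ⟨?_, ⟨invariantEquivQuotient Γ' _⟩⟩
  have hvalues := (Set.finite_Icc (-∑ b ∈ f.support, |f b|) (∑ b ∈ f.support, |f b|)).image
    ((↑) : ℤ → ℝ)
  refine ((finite_setOf_forall_mem_and_invariant Γ' hvalues).preimage
    (liftedConv_injective f hfinv h2).injOn).subset ?_
  rintro x ⟨hx, hinv⟩
  exact ⟨liftedConv_mem_image_Icc f hx, fun g hg => liftedConv_inv_mul f (hinv g hg)⟩

/-- If `Γ' ⊴ Γ` has finite index and `f ∈ ℤΓ` is invertible in `ℓ¹(Γ)`, then the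
set `Fix(Γ', X_f)` of `Γ'`-fixed points of `X_f` is finite, and is in bijection
with `X_f^{Γ'} = {x ∈ 𝕋^{Γ'\Γ} : x·f* = 0}`. -/
theorem stmt6 {Γ : Type*} [Group Γ] [Countable Γ] [DecidableEq Γ]
    (Γ' : Subgroup Γ) [Γ'.Normal] [Γ'.FiniteIndex]
    (f : Γ →₀ ℤ) (finv : Γ → ℝ)
    (hfinv : Summable fun γ => ‖finv γ‖)
    (h1 : convR (fun γ => (f γ : ℝ)) finv = deltaE Γ)
    (h2 : convR finv (fun γ => (f γ : ℝ)) = deltaE Γ) :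
    Set.Finite {x : Γ → AddCircle (1 : ℝ) |
        (∀ γ, convT x (fstar f) γ = 0) ∧ ∀ g ∈ Γ', ∀ γ, x (g⁻¹ * γ) = x γ} ∧
    Nonempty
      ({x : Γ → AddCircle (1 : ℝ) |
          (∀ γ, convT x (fstar f) γ = 0) ∧ ∀ g ∈ Γ', ∀ γ, x (g⁻¹ * γ) = x γ} ≃
        {ψ : Quotient (QuotientGroup.rightRel Γ') → AddCircle (1 : ℝ) |
          ∀ γ, convT (fun g => ψ (Quotient.mk (QuotientGroup.rightRel Γ') g))
            (fstar f) γ = 0}) :=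
  stmt6_general Γ' f finv hfinv h2
end

section
/- Let Γ be residually finite with Γ_i ⊴ Γ of finite index and ⋂_{n} ⋃_{i≥n} Γ_i = {e}, and f ∈ ℤΓ invertible in ℓ¹(Γ). Then for every x ∈ X_f there exist y_i ∈ Fix(Γ_i, X_f) with lim_i y_i = x; in particular, the union of the sets of Γ_i-periodic points is dense in X_f. -/
open scoped BigOperators

open Filter

/-!
Lift `x ∈ X_f` to a bounded real function `x̃`; then `z = x̃ · f*` is integer valued. Make `z`
`Γ_i`-periodic by copying its value at a fixed representative of each coset `Γ_i γ`: with
representatives chosen first in an enumeration of `Γ`, these `z_i` agree with `z` at each point for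
all large `i`. Since `f*` is invertible in `ℓ¹(Γ)` with inverse `(f⁻¹)*`, the map
`ξ(w) = w · (f⁻¹)* mod 1` sends bounded integer-valued functions into `X_f`, is equivariant and
continuous on bounded sets for pointwise convergence (dominated convergence), and `ξ(z) = x`;
so `y_i = ξ(z_i)` are `Γ_i`-periodic points converging to `x`.
-/

lemma summable_norm_finsupp {Γ : Type*} (T : Γ →₀ ℤ) : Summable fun γ => ‖(T γ : ℝ)‖ :=
  summable_of_ne_finset_zero (s := T.support) fun γ hγ => by
    simp [Finsupp.notMem_support_iff.mp hγ]

section Convolution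

variable {Γ : Type*} [Group Γ]

lemma summable_norm_comp_inv_mul {a : Γ → ℝ} (ha : Summable fun γ => ‖a γ‖) (γ : Γ) :
    Summable fun β => ‖a (β⁻¹ * γ)‖ :=
  ((Equiv.inv Γ).trans (Equiv.mulRight γ)).summable_iff (f := fun β => ‖a β‖) |>.mpr ha

lemma summable_mul_comp_inv_mul {w a : Γ → ℝ} {C : ℝ} (hw : ∀ β, |w β| ≤ C)
    (ha : Summable fun γ => ‖a γ‖) (γ : Γ) : Summable fun β => w β * a (β⁻¹ * γ) :=
  .of_norm_bounded ((summable_norm_comp_inv_mul ha γ).mul_left C) fun β => by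
    rw [norm_mul, Real.norm_eq_abs]
    exact mul_le_mul_of_nonneg_right (hw β) (norm_nonneg _)

lemma abs_convR_le {w a : Γ → ℝ} {C : ℝ} (hw : ∀ β, |w β| ≤ C)
    (ha : Summable fun γ => ‖a γ‖) (γ : Γ) : |convR w a γ| ≤ C * ∑' β, ‖a β‖ := by
  have hsum : ∑' β, ‖a (β⁻¹ * γ)‖ = ∑' β, ‖a β‖ :=
    ((Equiv.inv Γ).trans (Equiv.mulRight γ)).tsum_eq fun β => ‖a β‖
  calc |convR w a γ| ≤ ∑' β, ‖w β * a (β⁻¹ * γ)‖ :=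
        norm_tsum_le_tsum_norm (summable_mul_comp_inv_mul hw ha γ).norm
    _ ≤ ∑' β, C * ‖a (β⁻¹ * γ)‖ := by
        refine Summable.tsum_le_tsum (fun β => ?_) (summable_mul_comp_inv_mul hw ha γ).norm
          ((summable_norm_comp_inv_mul ha γ).mul_left C)
        rw [norm_mul, Real.norm_eq_abs]
        exact mul_le_mul_of_nonneg_right (hw β) (norm_nonneg _)
    _ = C * ∑' β, ‖a β‖ := by rw [tsum_mul_left, hsum]

lemma convR_assoc {w a b : Γ → ℝ} {C : ℝ} (hw : ∀ β, |w β| ≤ C)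
    (ha : Summable fun γ => ‖a γ‖) (hb : Summable fun γ => ‖b γ‖) :
    convR (convR w a) b = convR w (convR a b) := by
  funext γ
  set H : Γ → Γ → ℝ := fun α β => w α * a (α⁻¹ * β) * b (β⁻¹ * γ)
  have hH : Summable (Function.uncurry H) := by
    have hprod : Summable fun p : Γ × Γ => ‖a p.1‖ * ‖b (p.2⁻¹ * γ)‖ :=
      summable_mul_of_summable_norm (f := fun u => ‖a u‖) (g := fun β => ‖b (β⁻¹ * γ)‖)
        (by simpa only [norm_norm] using ha)
        (by simpa only [norm_norm] using summable_norm_comp_inv_mul hb γ)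
    have hinj : Function.Injective fun p : Γ × Γ => (p.1⁻¹ * p.2, p.2) := by
      intro p q h
      simp only [Prod.mk.injEq] at h
      ext
      · simpa [h.2] using h.1
      · exact h.2
    refine .of_norm_bounded ((hprod.comp_injective hinj).mul_left C) fun p => ?_
    simp only [Function.uncurry, H, Function.comp_apply, norm_mul, Real.norm_eq_abs]
    rw [mul_assoc]
    exact mul_le_mul_of_nonneg_right (hw p.1) (by positivity)
  calc convR (convR w a) b γ = ∑' β, ∑' α, H α β := by
        refine tsum_congr fun β => ?_
        simp only [convR, H, ← tsum_mul_right]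
    _ = ∑' α, ∑' β, H α β := hH.tsum_comm
    _ = ∑' α, w α * ∑' u, a u * b (u⁻¹ * (α⁻¹ * γ)) := by
        refine tsum_congr fun α => ?_
        rw [← tsum_mul_left, ← (Equiv.mulLeft α).tsum_eq]
        refine tsum_congr fun u => ?_
        simp only [H, Equiv.coe_mulLeft, inv_mul_cancel_left, mul_inv_rev, mul_assoc]
    _ = convR w (convR a b) γ := rfl

lemma convR_deltaE [DecidableEq Γ] (w : Γ → ℝ) : convR w (deltaE Γ) = w := by
  funext γ
  rw [convR, tsum_eq_single γ fun β hβ => by simp [deltaE, inv_mul_eq_one, hβ]]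
  simp [deltaE]

lemma convR_comp_inv (a b : Γ → ℝ) :
    convR (fun γ => a γ⁻¹) (fun γ => b γ⁻¹) = fun γ => convR b a γ⁻¹ := by
  funext γ
  refine ((Equiv.mulLeft γ).tsum_eq _).symm.trans (tsum_congr fun β => ?_)
  simp only [Equiv.coe_mulLeft, mul_inv_rev, inv_inv, inv_mul_cancel_left, mul_comm (a _)]

lemma convR_comp_mul_left (w a : Γ → ℝ) (g γ : Γ) :
    convR (fun β => w (g * β)) a γ = convR w a (g * γ) := by
  rw [convR, convR, ← (Equiv.mulLeft g⁻¹).tsum_eq]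
  refine tsum_congr fun β => ?_
  simp only [Equiv.coe_mulLeft, mul_inv_cancel_left, mul_inv_rev, inv_inv, mul_assoc]

lemma tendsto_convR {ι : Type*} {l : Filter ι} {w : ι → Γ → ℝ} {v a : Γ → ℝ} {C : ℝ}
    (hw : ∀ i β, |w i β| ≤ C) (hwv : ∀ β, Tendsto (fun i => w i β) l (nhds (v β)))
    (ha : Summable fun γ => ‖a γ‖) (γ : Γ) :
    Tendsto (fun i => convR (w i) a γ) l (nhds (convR v a γ)) :=
  tendsto_tsum_of_dominated_convergence ((summable_norm_comp_inv_mul ha γ).mul_left C)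
    (fun β => (hwv β).mul_const _) <| .of_forall fun i β => by
      rw [norm_mul, Real.norm_eq_abs]
      exact mul_le_mul_of_nonneg_right (hw i β) (norm_nonneg _)

lemma coe_convR_finsupp (w : Γ → ℝ) (T : Γ →₀ ℤ) (γ : Γ) :
    ((convR w (fun β => (T β : ℝ)) γ : ℝ) : AddCircle (1 : ℝ))
      = convT (fun β => (w β : AddCircle (1 : ℝ))) T γ := by
  have hsupp : ∀ α ∉ T.support, w (γ * α⁻¹) * (T α : ℝ) = 0 := fun α hα => by
    simp [Finsupp.notMem_support_iff.mp hα]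
  rw [convR, ← ((Equiv.inv Γ).trans (Equiv.mulLeft γ)).tsum_eq]
  simp only [Equiv.trans_apply, Equiv.inv_apply, Equiv.coe_mulLeft, mul_inv_rev, inv_inv,
    inv_mul_cancel_right]
  rw [tsum_eq_sum hsupp]
  simp [convT, mul_comm (w _), ← zsmul_eq_mul]

end Convolution

lemma eventually_notMem_of_notMem_iInter_iUnion {α : Type*} {s : ℕ → Set α} {a : α}
    (ha : a ∉ ⋂ n, ⋃ i, ⋃ (_ : n ≤ i), s i) : ∀ᶠ i in atTop, a ∉ s i := by
  simpa [eventually_atTop] using ha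

lemma exists_invariant_eventually_eq_self {Γ : Type*} [Group Γ] [Countable Γ]
    (H : ℕ → Subgroup Γ) (hH : ∀ g : Γ, g ≠ 1 → ∀ᶠ i in atTop, g ∉ H i) :
    ∃ r : ℕ → Γ → Γ, (∀ i, ∀ g ∈ H i, ∀ γ, r i (g * γ) = r i γ) ∧
      ∀ γ, ∀ᶠ i in atTop, r i γ = γ := by
  classical
  obtain ⟨e, he⟩ := exists_surjective_nat Γ
  have hrep : ∀ i γ, ∃ n, e n * γ⁻¹ ∈ H i := fun i γ => by
    obtain ⟨n, hn⟩ := he γ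
    exact ⟨n, by simp [hn]⟩
  refine ⟨fun i γ => e (Nat.find (hrep i γ)), fun i g hg γ => ?_, fun γ => ?_⟩
  · refine congrArg e (Nat.find_congr' fun {n} => ?_)
    rw [mul_inv_rev, ← mul_assoc, Subgroup.mul_mem_cancel_right _ (inv_mem hg)]
  · let n₀ := Nat.find (he γ)
    have hn₀ : e n₀ = γ := Nat.find_spec (he γ)
    have hsep : ∀ᶠ i in atTop, ∀ m ∈ Finset.range n₀, e m * γ⁻¹ ∉ H i :=
      (eventually_all_finset _).2 fun m hm => hH _ <| by
        rw [Ne, mul_inv_eq_one]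
        exact Nat.find_min (he γ) (Finset.mem_range.1 hm)
    filter_upwards [hsep] with i hi
    rw [(Nat.find_eq_iff (hrep i γ)).2 ⟨by simp [hn₀], fun m hm => hi m (Finset.mem_range.2 hm)⟩,
      hn₀]

lemma AddCircle.exists_abs_le_lift {ι : Type*} {p : ℝ} [Fact (0 < p)] (x : ι → AddCircle p) :
    ∃ w : ι → ℝ, (∀ i, |w i| ≤ p) ∧ ∀ i, (w i : AddCircle p) = x i := by
  refine ⟨fun i => AddCircle.equivIco p 0 (x i), fun i => ?_, fun i => AddCircle.coe_equivIco⟩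
  obtain ⟨h0, hp⟩ := (AddCircle.equivIco p 0 (x i)).2
  rw [abs_of_nonneg h0]
  linarith

theorem exists_tendsto_periodic_of_convR_eq_deltaE {Γ : Type*} [Group Γ] [Countable Γ]
    [DecidableEq Γ] {T : Γ →₀ ℤ} {G : Γ → ℝ} (hG : Summable fun γ => ‖G γ‖)
    (hTG : convR (fun γ => (T γ : ℝ)) G = deltaE Γ) (hGT : convR G (fun γ => (T γ : ℝ)) = deltaE Γ)
    (H : ℕ → Subgroup Γ) (hH : ∀ g : Γ, g ≠ 1 → ∀ᶠ i in atTop, g ∉ H i)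
    {x : Γ → AddCircle (1 : ℝ)} (hx : ∀ γ, convT x T γ = 0) :
    ∃ y : ℕ → Γ → AddCircle (1 : ℝ),
      (∀ i, (∀ γ, convT (y i) T γ = 0) ∧ ∀ g ∈ H i, ∀ γ, y i (g⁻¹ * γ) = y i γ) ∧
        Tendsto y atTop (nhds x) := by
  have hT := summable_norm_finsupp T
  obtain ⟨xt, hxt_le, hxt⟩ := AddCircle.exists_abs_le_lift x
  set z := convR xt (fun γ => (T γ : ℝ))
  have hz_le : ∀ γ, |z γ| ≤ 1 * ∑' β, ‖(T β : ℝ)‖ := abs_convR_le hxt_le hT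
  have hz_int : ∀ γ, (z γ : AddCircle (1 : ℝ)) = 0 := fun γ => by
    rw [coe_convR_finsupp, funext hxt, hx]
  obtain ⟨r, hr_inv, hr_lim⟩ := exists_invariant_eventually_eq_self H hH
  refine ⟨fun i γ => (convR (fun β => z (r i β)) G γ : AddCircle (1 : ℝ)),
    fun i => ⟨fun γ => ?_, fun g hg γ => ?_⟩, tendsto_pi_nhds.2 fun γ => ?_⟩
  · rw [← coe_convR_finsupp, convR_assoc (fun β => hz_le (r i β)) hG hT, hGT, convR_deltaE,
      hz_int]
  · dsimp only
    rw [← convR_comp_mul_left]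
    simp only [hr_inv i g⁻¹ (inv_mem hg)]
  · have hz_lim : ∀ β, Tendsto (fun i => z (r i β)) atTop (nhds (z β)) := fun β =>
      tendsto_const_nhds.congr' <| (hr_lim β).mono fun i h => congrArg z h.symm
    have hxt_rec : convR z G = xt := by
      rw [convR_assoc hxt_le hT hG, hTG, convR_deltaE]
    have hcoe : Continuous fun t : ℝ => (t : AddCircle (1 : ℝ)) := AddCircle.continuous_mk' 1
    have := (hcoe.tendsto _).comp (tendsto_convR (fun i β => hz_le (r i β)) hz_lim hG γ)
    rwa [hxt_rec, hxt] at this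

theorem stmt15_general {Γ : Type*} [Group Γ] [Countable Γ] [DecidableEq Γ]
    (f : Γ →₀ ℤ) (finv : Γ → ℝ)
    (hfinv : Summable fun γ => ‖finv γ‖)
    (h1 : convR (fun γ => (f γ : ℝ)) finv = deltaE Γ)
    (h2 : convR finv (fun γ => (f γ : ℝ)) = deltaE Γ)
    (Γi : ℕ → Subgroup Γ)
    (hΓlim : (⋂ n, ⋃ i, ⋃ (_ : n ≤ i), ((Γi i : Set Γ))) = {1})
    (Fixn : ℕ → Set (Γ → AddCircle (1 : ℝ)))
    (hFixn : ∀ n, Fixn n = {x | (∀ γ, convT x (fstar f) γ = 0) ∧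
        ∀ g ∈ Γi n, ∀ γ, x (g⁻¹ * γ) = x γ}) :
    (∀ x : Γ → AddCircle (1 : ℝ), (∀ γ, convT x (fstar f) γ = 0) →
      ∃ y : ℕ → (Γ → AddCircle (1 : ℝ)), (∀ i, y i ∈ Fixn i) ∧
        Tendsto y atTop (nhds x)) ∧
    {x : Γ → AddCircle (1 : ℝ) | ∀ γ, convT x (fstar f) γ = 0} ⊆
      closure (⋃ i, Fixn i) := by
  have hfstar : (fun γ => (fstar f γ : ℝ)) = fun γ => (f γ⁻¹ : ℝ) := by
    funext γ
    simp [fstar, Finsupp.equivMapDomain_apply]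
  have hdelta : (fun γ => deltaE Γ γ⁻¹) = deltaE Γ := by
    funext γ
    simp [deltaE]
  have hG : Summable fun γ => ‖finv γ⁻¹‖ :=
    (Equiv.inv Γ).summable_iff (f := fun γ => ‖finv γ‖) |>.mpr hfinv
  have hTG : convR (fun γ => (fstar f γ : ℝ)) (fun γ => finv γ⁻¹) = deltaE Γ := by
    rw [hfstar, convR_comp_inv (fun γ => (f γ : ℝ)) finv, h2, hdelta]
  have hGT : convR (fun γ => finv γ⁻¹) (fun γ => (fstar f γ : ℝ)) = deltaE Γ := by
    rw [hfstar, convR_comp_inv finv (fun γ => (f γ : ℝ)), h1, hdelta]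
  have hΓ : ∀ g : Γ, g ≠ 1 → ∀ᶠ i in atTop, g ∉ Γi i := fun g hg =>
    eventually_notMem_of_notMem_iInter_iUnion (by rwa [hΓlim])
  have approx : ∀ x : Γ → AddCircle (1 : ℝ), (∀ γ, convT x (fstar f) γ = 0) →
      ∃ y : ℕ → (Γ → AddCircle (1 : ℝ)), (∀ i, y i ∈ Fixn i) ∧ Tendsto y atTop (nhds x) := by
    simpa only [hFixn, Set.mem_ofPred_eq] using fun x hx =>
      exists_tendsto_periodic_of_convR_eq_deltaE hG hTG hGT Γi hΓ hx
  refine ⟨approx, fun x hx => ?_⟩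
  obtain ⟨y, hy, hlim⟩ := approx x hx
  exact mem_closure_of_tendsto hlim (.of_forall fun i => Set.mem_iUnion.2 ⟨i, hy i⟩)

/-- With `Γ_i ⊴ Γ` of finite index, `⋂_n ⋃_{i ≥ n} Γ_i = {e}` and `f ∈ ℤΓ`
invertible in `ℓ¹(Γ)`: every `x ∈ X_f` is a limit of points `y_i ∈ Fix(Γ_i, X_f)`;
in particular the union of the sets of `Γ_i`-periodic points is dense in `X_f`. -/
theorem stmt15 {Γ : Type*} [Group Γ] [Countable Γ] [DecidableEq Γ]
    (f : Γ →₀ ℤ) (finv : Γ → ℝ)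
    (hfinv : Summable fun γ => ‖finv γ‖)
    (h1 : convR (fun γ => (f γ : ℝ)) finv = deltaE Γ)
    (h2 : convR finv (fun γ => (f γ : ℝ)) = deltaE Γ)
    (Γi : ℕ → Subgroup Γ) (hΓfi : ∀ i, (Γi i).FiniteIndex)
    (hΓnorm : ∀ i, (Γi i).Normal)
    (hΓlim : (⋂ n, ⋃ i, ⋃ (_ : n ≤ i), ((Γi i : Set Γ))) = {1})
    (Fixn : ℕ → Set (Γ → AddCircle (1 : ℝ)))
    (hFixn : ∀ n, Fixn n = {x | (∀ γ, convT x (fstar f) γ = 0) ∧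
        ∀ g ∈ Γi n, ∀ γ, x (g⁻¹ * γ) = x γ}) :
    (∀ x : Γ → AddCircle (1 : ℝ), (∀ γ, convT x (fstar f) γ = 0) →
      ∃ y : ℕ → (Γ → AddCircle (1 : ℝ)), (∀ i, y i ∈ Fixn i) ∧
        Tendsto y atTop (nhds x)) ∧
    {x : Γ → AddCircle (1 : ℝ) | ∀ γ, convT x (fstar f) γ = 0} ⊆
      closure (⋃ i, Fixn i) :=
  stmt15_general f finv hfinv h1 h2 Γi hΓlim Fixn hFixn
end
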